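/- arXiv:2506.15444 — 7 statements merged into one kernel-verified Lean document; each statement's English description precedes it below -/
import Mathlib

section
/- Let n ≥ 2 and let ω₁, …, ωₙ be complex numbers in the open unit disk 𝔻. Then the model matrix Mₙ = Mₙ(ω₁, …, ωₙ) is a contraction, i.e. its ℓ²-operator norm satisfies ‖Mₙ‖ ≤ 1. -/
/-!
`Mᴴ M = 1 - w̄ wᵀ` for the vector `w j = √(1 - |ω_j|²) · ∏_{l < j} (-conj ω_l)`, so `1 - Mᴴ M` is
positive semidefinite and `‖M‖ ≤ 1` in the C⋆-algebra of matrices. For `i ≤ j`, the entries of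
columns `i` and `j` in rows `k < i` differ only by a common factor, so the `(i, j)` entry of `Mᴴ M`
reduces to the telescoping sum `∑_{k<i} (1 - |ω_k|²) ∏_{k<l<i} |ω_l|² = 1 - ∏_{l<i} |ω_l|²`.
-/

open scoped ComplexConjugate

/-- The model matrix `Mₙ(ω₁, …, ωₙ)`: diagonal entries `ωⱼ`, entries above the diagonal
`(∏_{k=i+1}^{j−1} (−conj ω_k)) · √(1 − |ωᵢ|²) · √(1 − |ωⱼ|²)`, zeros below the diagonal. -/
noncomputable def modelMatrix (n : ℕ) (ω : Fin n → ℂ) : Matrix (Fin n) (Fin n) ℂ :=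
  Matrix.of fun i j =>
    if i = j then ω i
    else if i < j then
      (∏ k ∈ Finset.Ioo i j, -(conj (ω k))) *
        ((Real.sqrt (1 - ‖ω i‖ ^ 2) *
          Real.sqrt (1 - ‖ω j‖ ^ 2) : ℝ) : ℂ)
    else 0

open Finset Matrix
open scoped ComplexOrder

theorem Finset.sum_one_sub_mul_prod_Ioo {ι R : Type*} [LinearOrder ι] [LocallyFiniteOrder ι]
    [LocallyFiniteOrderBot ι] [CommRing R] (a : ι → R) (m : ι) :
    ∑ k ∈ Iio m, (1 - a k) * ∏ l ∈ Ioo k m, a l = 1 - ∏ l ∈ Iio m, a l := by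
  have h := prod_add_ordered (Iio m) a fun l => 1 - a l
  have hfilter : ∀ k ∈ Iio m, {l ∈ Iio m | k < l} = Ioo k m := fun k _ => by ext; simp; tauto
  simp only [add_sub_cancel, prod_const_one, mul_one] at h
  rw [sum_congr rfl fun k hk => by rw [← hfilter k hk]]
  linear_combination -h

theorem Finset.prod_Ioo_mul_prod_Ico {ι M : Type*} [LinearOrder ι] [LocallyFiniteOrder ι]
    [CommMonoid M] (f : ι → M) {a b c : ι} (hab : a < b) (hbc : b ≤ c) :
    (∏ l ∈ Ioo a b, f l) * ∏ l ∈ Ico b c, f l = ∏ l ∈ Ioo a c, f l := by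
  classical
  rw [← prod_union (disjoint_left.2 fun x hx hx' => by simp at hx hx'; order)]
  congr 1; ext; simp; grind

theorem Finset.prod_Iio_mul_prod_Ico {ι M : Type*} [LinearOrder ι] [LocallyFiniteOrder ι]
    [LocallyFiniteOrderBot ι] [CommMonoid M] (f : ι → M) {b c : ι} (hbc : b ≤ c) :
    (∏ l ∈ Iio b, f l) * ∏ l ∈ Ico b c, f l = ∏ l ∈ Iio c, f l := by
  classical
  rw [← prod_union (disjoint_left.2 fun x hx hx' => by simp at hx hx'; order)]
  congr 1; ext; simp; grind

theorem Complex.conj_prod_neg_conj_mul_self {ι : Type*} (s : Finset ι) (z : ι → ℂ) :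
    conj (∏ l ∈ s, -conj (z l)) * ∏ l ∈ s, -conj (z l) = ((∏ l ∈ s, ‖z l‖ ^ 2 : ℝ) : ℂ) := by
  simp only [Complex.conj_mul', norm_prod, norm_neg, Complex.norm_conj, prod_pow,
    Complex.ofReal_pow]

open scoped Matrix.Norms.L2Operator MatrixOrder in
theorem Matrix.norm_toEuclideanCLM_le_one_of_posSemidef {n : Type*} [Fintype n] [DecidableEq n]
    {A : Matrix n n ℂ} (h : (1 - Aᴴ * A).PosSemidef) : ‖toEuclideanCLM (𝕜 := ℂ) A‖ ≤ 1 := by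
  have hle : ‖Aᴴ * A‖ ≤ 1 :=
    (CStarAlgebra.norm_le_one_iff_of_nonneg _ (posSemidef_conjTranspose_mul_self A).nonneg).2 h
  rw [l2_opNorm_conjTranspose_mul_self] at hle
  rw [← cstar_norm_def]
  nlinarith [norm_nonneg A]

noncomputable def diskDefect (z : ℂ) : ℝ := √(1 - ‖z‖ ^ 2)

theorem diskDefect_sq {z : ℂ} (hz : ‖z‖ ≤ 1) : diskDefect z ^ 2 = 1 - ‖z‖ ^ 2 :=
  Real.sq_sqrt (by nlinarith [norm_nonneg z])

section ModelMatrix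

variable {n : ℕ} (ω : Fin n → ℂ)

noncomputable def modelDefectVector (j : Fin n) : ℂ :=
  (∏ l ∈ Iio j, -conj (ω l)) * diskDefect (ω j)

noncomputable def modelColumnTail (i j : Fin n) : ℂ :=
  (∏ l ∈ Ico i j, -conj (ω l)) * diskDefect (ω j)

theorem modelMatrix_apply_self (i : Fin n) : modelMatrix n ω i i = ω i := by
  simp [modelMatrix]

theorem modelMatrix_apply_of_lt {k j : Fin n} (h : k < j) :
    modelMatrix n ω k j = (∏ l ∈ Ioo k j, -conj (ω l)) * diskDefect (ω k) * diskDefect (ω j) := by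
  simp [modelMatrix, h.ne, h, diskDefect, mul_assoc]

theorem modelMatrix_apply_of_gt {k j : Fin n} (h : j < k) : modelMatrix n ω k j = 0 := by
  simp [modelMatrix, h.ne', h.not_gt]

theorem modelColumnTail_self (i : Fin n) : modelColumnTail ω i i = diskDefect (ω i) := by
  simp [modelColumnTail]

theorem modelMatrix_apply_eq_mul_modelColumnTail {k i j : Fin n} (hki : k < i) (hij : i ≤ j) :
    modelMatrix n ω k j =
      (∏ l ∈ Ioo k i, -conj (ω l)) * diskDefect (ω k) * modelColumnTail ω i j := by
  rw [modelMatrix_apply_of_lt ω (hki.trans_le hij), modelColumnTail,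
    ← prod_Ioo_mul_prod_Ico _ hki hij]
  ring

theorem modelDefectVector_eq_mul_modelColumnTail {i j : Fin n} (hij : i ≤ j) :
    modelDefectVector ω j = (∏ l ∈ Iio i, -conj (ω l)) * modelColumnTail ω i j := by
  rw [modelDefectVector, modelColumnTail, ← prod_Iio_mul_prod_Ico _ hij, mul_assoc]

variable {ω}

theorem conj_mul_modelMatrix_apply {i j : Fin n} (hi : ‖ω i‖ ≤ 1) (hij : i ≤ j) :
    conj (ω i) * modelMatrix n ω i j =
      (if i = j then 1 else 0) - diskDefect (ω i) * modelColumnTail ω i j := by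
  rcases hij.eq_or_lt with rfl | hlt
  · rw [modelMatrix_apply_self, modelColumnTail_self, Complex.conj_mul', if_pos rfl,
      ← Complex.ofReal_mul, ← sq, diskDefect_sq hi]
    push_cast; ring
  · rw [modelMatrix_apply_of_lt ω hlt, modelColumnTail, if_neg hlt.ne,
      ← Ioo_insert_left hlt, prod_insert (by simp)]
    ring

theorem sum_conj_modelMatrix_mul_modelMatrix (hω : ∀ i, ‖ω i‖ ≤ 1) {i j : Fin n} (hij : i ≤ j) :
    ∑ k, conj (modelMatrix n ω k i) * modelMatrix n ω k j =
      (if i = j then 1 else 0) - conj (modelDefectVector ω i) * modelDefectVector ω j := by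
  have hsupp : ∑ k, conj (modelMatrix n ω k i) * modelMatrix n ω k j =
      ∑ k ∈ Iio i, conj (modelMatrix n ω k i) * modelMatrix n ω k j +
        conj (ω i) * modelMatrix n ω i j := by
    rw [← sum_subset (subset_univ (Iic i)) fun k _ hk => by
        rw [modelMatrix_apply_of_gt ω (not_le.1 (by simpa using hk)), map_zero, zero_mul],
      Iic_eq_cons_Iio, sum_cons, modelMatrix_apply_self, add_comm]
  have hterm : ∀ k ∈ Iio i, conj (modelMatrix n ω k i) * modelMatrix n ω k j =
      (((1 - ‖ω k‖ ^ 2) * ∏ l ∈ Ioo k i, ‖ω l‖ ^ 2 : ℝ) : ℂ) *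
        (diskDefect (ω i) * modelColumnTail ω i j) := by
    intro k hk
    have hki : k < i := mem_Iio.1 hk
    have hP := Complex.conj_prod_neg_conj_mul_self (Ioo k i) ω
    have hd : (diskDefect (ω k) : ℂ) ^ 2 = 1 - ‖ω k‖ ^ 2 := by exact_mod_cast diskDefect_sq (hω k)
    rw [modelMatrix_apply_eq_mul_modelColumnTail ω hki le_rfl,
      modelMatrix_apply_eq_mul_modelColumnTail ω hki hij, modelColumnTail_self]
    simp only [map_mul, Complex.conj_ofReal]
    push_cast at hP ⊢
    linear_combination
      (diskDefect (ω k) ^ 2 * diskDefect (ω i) * modelColumnTail ω i j : ℂ) * hP +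
        ((∏ l ∈ Ioo k i, (‖ω l‖ : ℂ) ^ 2) * diskDefect (ω i) * modelColumnTail ω i j) * hd
  have hQ := Complex.conj_prod_neg_conj_mul_self (Iio i) ω
  rw [hsupp, sum_congr rfl hterm, ← sum_mul, ← Complex.ofReal_sum, sum_one_sub_mul_prod_Ioo,
    conj_mul_modelMatrix_apply (hω i) hij, modelDefectVector_eq_mul_modelColumnTail ω hij,
    modelDefectVector_eq_mul_modelColumnTail ω le_rfl, modelColumnTail_self]
  simp only [map_mul, Complex.conj_ofReal]
  push_cast at hQ ⊢
  linear_combination (diskDefect (ω i) * modelColumnTail ω i j : ℂ) * hQ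

theorem conjTranspose_modelMatrix_mul_self (hω : ∀ i, ‖ω i‖ ≤ 1) :
    (modelMatrix n ω)ᴴ * modelMatrix n ω =
      1 - vecMulVec (star (modelDefectVector ω)) (modelDefectVector ω) := by
  have hL := isHermitian_conjTranspose_mul_self (modelMatrix n ω)
  have hR := (isHermitian_one (n := Fin n) (α := ℂ)).sub
    (posSemidef_vecMulVec_star_self (modelDefectVector ω)).isHermitian
  have hle : ∀ i j, i ≤ j → ((modelMatrix n ω)ᴴ * modelMatrix n ω) i j =
      (1 - vecMulVec (star (modelDefectVector ω)) (modelDefectVector ω)) i j := fun i j hij => by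
    simpa [mul_apply, one_apply, vecMulVec_apply] using
      sum_conj_modelMatrix_mul_modelMatrix hω hij
  ext i j
  rcases le_or_gt i j with hij | hji
  · exact hle i j hij
  · rw [← hL.apply, hle j i hji.le, hR.apply]

end ModelMatrix

theorem modelMatrix_contraction_general {n : ℕ} (ω : Fin n → ℂ)
    (hω : ∀ i, ‖ω i‖ < 1) :
    ‖Matrix.toEuclideanCLM (𝕜 := ℂ) (modelMatrix n ω)‖ ≤ 1 := by
  apply norm_toEuclideanCLM_le_one_of_posSemidef
  rw [conjTranspose_modelMatrix_mul_self fun i => (hω i).le, sub_sub_cancel]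
  exact posSemidef_vecMulVec_star_self _

theorem modelMatrix_contraction {n : ℕ} (hn : 2 ≤ n) (ω : Fin n → ℂ)
    (hω : ∀ i, ‖ω i‖ < 1) :
    ‖Matrix.toEuclideanCLM (𝕜 := ℂ) (modelMatrix n ω)‖ ≤ 1 :=
  modelMatrix_contraction_general ω hω
end

section
/- Let (ω_k)_{k≥1} be a sequence in the open unit disk 𝔻 and let m : ℕ* × ℕ* → ℂ be an infinite upper-triangular matrix with m(i,i) = ωᵢ for all i ≥ 1, m(i,i+1) = √(1 − |ωᵢ|²)·√(1 − |ω_{i+1}|²) for all i ≥ 1, and m(i,j) = 0 for i > j. Then there exists a bounded linear operator T on ℓ²(ℕ*) with ‖T‖ ≤ 1 whose matrix in the canonical orthonormal basis (e_k) satisfies ⟨T e_j, e_i⟩ = m(i,j) for all i, j, if and only if m(i, i+j) = (∏_{k=i+1}^{i+j−1} (−conj(ω_k)))·√(1 − |ωᵢ|²)·√(1 − |ω_{i+j}|²) for all i ≥ 1 and j ≥ 1 (empty product equal to 1). -/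
/-!
Write `sᵢ = √(1 - |ωᵢ|²)` (`defect`) and `Wᵢ(a) = (∏_{i ≤ l < a} -conj ω_l) s_a` for `a ≥ i`
(`defectRow`). The matrix `M` on the right-hand side satisfies `M i a = sᵢ W_{i+1}(a) + ωᵢ [i = a]`
and `Wᵢ(a) = -conj ωᵢ W_{i+1}(a) + sᵢ [i = a]`: the pair `(Wᵢ, row i of M)` is the image of
`(W_{i+1}, eᵢ)` under the unitary `[[-conj ωᵢ, sᵢ], [sᵢ, ωᵢ]]`. Downward induction on `i` gives
`M*M + Wᵢ*Wᵢ = 1` on every finite window `[i, b]`, so every finite section of `M` is a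
contraction and `M` is the matrix of a contraction.

Conversely, suppose a contraction `T` agrees with `M` on `[i, b]²` except possibly at the corner
`(i, b)`, where it differs by `δ`. Choose `x` supported on `{i, i + 1, b}` with `x_b = 1`,
`Wᵢ x = 0` and `(M x)_i = 0`. On the window `T x = M x + δ eᵢ`, where `‖M x‖ = ‖x‖` and
`M x ⊥ eᵢ`, so Bessel gives `‖x‖² + |δ|² ≤ ‖T x‖² ≤ ‖x‖²`. Induction on the distance to the
diagonal then shows that `M` is the only possible matrix.
-/

open scoped ComplexConjugate lp

namespace lp

variable {ι 𝕜 : Type*} [RCLike 𝕜]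

theorem sum_norm_sq_le_norm_sq (f : ℓ²(ι, 𝕜)) (s : Finset ι) :
    ∑ i ∈ s, ‖f i‖ ^ 2 ≤ ‖f‖ ^ 2 := by
  simpa using lp.sum_rpow_le_norm_rpow (p := 2) (by norm_num) f s

theorem norm_sum_single_sq [DecidableEq ι] (x : ι → 𝕜) (s : Finset ι) :
    ‖∑ i ∈ s, lp.single 2 i (x i)‖ ^ 2 = ∑ i ∈ s, ‖x i‖ ^ 2 := by
  simpa using lp.norm_sum_single (p := 2) (by norm_num) x s

theorem orthonormal_single [DecidableEq ι] :
    Orthonormal 𝕜 (fun i : ι => lp.single 2 i (1 : 𝕜)) := by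
  rw [orthonormal_iff_ite]
  intro i j
  rw [lp.inner_single_left, lp.single_apply, Pi.single_apply]
  split_ifs <;> simp_all

theorem sum_norm_inner_single_sq_le [DecidableEq ι] {F : Type*} [SeminormedAddCommGroup F]
    [NormedSpace 𝕜 F] {T : F →L[𝕜] ℓ²(ι, 𝕜)} (hT : ‖T‖ ≤ 1) (u : F) (s : Finset ι) :
    ∑ r ∈ s, ‖inner 𝕜 (lp.single 2 r (1 : 𝕜)) (T u)‖ ^ 2 ≤ ‖u‖ ^ 2 := by
  refine (orthonormal_single.sum_inner_products_le (T u)).trans ?_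
  have hTu : ‖T u‖ ≤ ‖u‖ := by simpa using T.le_of_opNorm_le hT u
  exact pow_le_pow_left₀ (norm_nonneg _) hTu 2

theorem inner_single_apply_sum_single [DecidableEq ι] (T : ℓ²(ι, 𝕜) →L[𝕜] ℓ²(ι, 𝕜)) (r : ι)
    (s : Finset ι) (x : ι → 𝕜) :
    inner 𝕜 (lp.single 2 r (1 : 𝕜)) (T (∑ a ∈ s, lp.single 2 a (x a))) =
      ∑ a ∈ s, inner 𝕜 (lp.single 2 r (1 : 𝕜)) (T (lp.single 2 a 1)) * x a := by
  simp only [map_sum, inner_sum]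
  refine Finset.sum_congr rfl fun a _ => ?_
  have hsingle : (lp.single 2 a (x a) : ℓ²(ι, 𝕜)) = x a • lp.single 2 a 1 := by
    rw [← lp.single_smul, smul_eq_mul, mul_one]
  rw [hsingle, map_smul, inner_smul_right, mul_comm]

variable {E : Type*} [NormedAddCommGroup E] [NormedSpace 𝕜 E] [CompleteSpace E]

section
variable {c : ι → E}
  (hc : ∀ (s : Finset ι) (x : ι → 𝕜), ‖∑ j ∈ s, x j • c j‖ ^ 2 ≤ ∑ j ∈ s, ‖x j‖ ^ 2)
include hc

theorem summable_smul_of_norm_sum_sq_le (f : ℓ²(ι, 𝕜)) : Summable fun j => f j • c j := by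
  have hf : Summable fun j => ‖f j‖ ^ 2 := by
    simpa using (lp.hasSum_norm (p := 2) (by norm_num) f).summable
  rw [summable_iff_vanishing_norm]
  intro ε hε
  obtain ⟨s, hs⟩ := summable_iff_vanishing_norm.mp hf (ε ^ 2) (by positivity)
  refine ⟨s, fun t hts => ?_⟩
  have htail : ∑ j ∈ t, ‖f j‖ ^ 2 < ε ^ 2 := (le_abs_self _).trans_lt (by simpa using hs t hts)
  exact lt_of_pow_lt_pow_left₀ 2 hε.le ((hc t f).trans_lt htail)

theorem norm_tsum_smul_le_of_norm_sum_sq_le (f : ℓ²(ι, 𝕜)) : ‖∑' j, f j • c j‖ ≤ ‖f‖ := by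
  refine le_of_tendsto' (summable_smul_of_norm_sum_sq_le hc f).hasSum.norm fun s => ?_
  exact le_of_pow_le_pow_left₀ two_ne_zero (norm_nonneg f)
    ((hc s f).trans (sum_norm_sq_le_norm_sq f s))

theorem exists_clm_of_norm_sum_sq_le [DecidableEq ι] :
    ∃ T : ℓ²(ι, 𝕜) →L[𝕜] E, ‖T‖ ≤ 1 ∧ ∀ j, T (lp.single 2 j 1) = c j := by
  let L : ℓ²(ι, 𝕜) →ₗ[𝕜] E :=
    { toFun := fun f => ∑' j, f j • c j
      map_add' := fun f g => by
        simp only [lp.coeFn_add, Pi.add_apply, add_smul]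
        exact (summable_smul_of_norm_sum_sq_le hc f).tsum_add
          (summable_smul_of_norm_sum_sq_le hc g)
      map_smul' := fun a f => by
        simp only [lp.coeFn_smul, Pi.smul_apply, smul_eq_mul, mul_smul, RingHom.id_apply]
        exact (summable_smul_of_norm_sum_sq_le hc f).tsum_const_smul a }
  refine ⟨L.mkContinuous 1 fun f => ?_, L.mkContinuous_norm_le zero_le_one _, fun j => ?_⟩
  · simpa [L] using norm_tsum_smul_le_of_norm_sum_sq_le hc f
  · simp only [LinearMap.mkContinuous_apply, LinearMap.coe_mk, AddHom.coe_mk, L]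
    rw [tsum_eq_single j fun i hi => by rw [lp.single_apply_ne 2 j _ hi, zero_smul],
      lp.single_apply_self, one_smul]

end

end lp

namespace Finset

theorem sum_norm_sq_add_ite_of_eq_zero {ι E : Type*} [DecidableEq ι]
    [SeminormedAddCommGroup E] {s : Finset ι} {i : ι} (hi : i ∈ s) {y : ι → E} (hy : y i = 0)
    (δ : E) :
    ∑ r ∈ s, ‖y r + if r = i then δ else 0‖ ^ 2 = ∑ r ∈ s, ‖y r‖ ^ 2 + ‖δ‖ ^ 2 := by
  rw [← add_sum_erase s _ hi, ← add_sum_erase s _ hi, hy, if_pos rfl, zero_add, norm_zero,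
    add_comm, sq (0 : ℝ), mul_zero, zero_add]
  congr 1
  exact sum_congr rfl fun r hr => by rw [if_neg (ne_of_mem_erase hr), add_zero]

end Finset

namespace InfiniteContraction

open Finset

variable (ω : ℕ+ → ℂ)

noncomputable def defect (i : ℕ+) : ℝ := √(1 - ‖ω i‖ ^ 2)

noncomputable def defectRow (i a : ℕ+) : ℂ :=
  if i ≤ a then (∏ l ∈ Ico i a, -conj (ω l)) * defect ω a else 0

noncomputable def modelMatrix (i a : ℕ+) : ℂ :=
  defect ω i * defectRow ω (i + 1) a + if i = a then ω i else 0

variable {ω}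

theorem defect_pos (hω : ∀ k, ‖ω k‖ < 1) (i : ℕ+) : 0 < defect ω i :=
  Real.sqrt_pos.mpr (by nlinarith [hω i, norm_nonneg (ω i)])

theorem defect_mul_self_add (hω : ∀ k, ‖ω k‖ < 1) (i : ℕ+) :
    (defect ω i : ℂ) * defect ω i + conj (ω i) * ω i = 1 := by
  have hsq : defect ω i * defect ω i = 1 - ‖ω i‖ ^ 2 :=
    Real.mul_self_sqrt (by nlinarith [hω i, norm_nonneg (ω i)])
  rw [Complex.conj_mul', ← Complex.ofReal_mul, hsq]
  push_cast
  ring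

theorem defectRow_eq_zero_of_lt {i a : ℕ+} (h : a < i) : defectRow ω i a = 0 :=
  if_neg h.not_ge

theorem defectRow_self (i : ℕ+) : defectRow ω i i = defect ω i := by
  simp [defectRow]

theorem defectRow_eq_neg_conj_mul_add (i a : ℕ+) :
    defectRow ω i a =
      -conj (ω i) * defectRow ω (i + 1) a + if i = a then (defect ω i : ℂ) else 0 := by
  rcases lt_trichotomy a i with h | rfl | h
  · rw [defectRow_eq_zero_of_lt h, defectRow_eq_zero_of_lt (h.trans (PNat.lt_add_right i 1)), if_neg h.ne']
    ring
  · rw [defectRow_self, defectRow_eq_zero_of_lt (PNat.lt_add_right a 1)]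
    simp
  · rw [defectRow, defectRow, if_pos h.le, if_pos (PNat.add_one_le_iff.mpr h), if_neg h.ne,
      ← insert_Ico_add_one_left_eq_Ico h, prod_insert (by simp)]
    ring

theorem modelMatrix_eq_zero_of_lt {i a : ℕ+} (h : a < i) : modelMatrix ω i a = 0 := by
  rw [modelMatrix, defectRow_eq_zero_of_lt (h.trans (PNat.lt_add_right i 1)), if_neg h.ne']
  ring

theorem modelMatrix_self (i : ℕ+) : modelMatrix ω i i = ω i := by
  rw [modelMatrix, defectRow_eq_zero_of_lt (PNat.lt_add_right i 1), if_pos rfl]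
  ring

theorem modelMatrix_add_one (i : ℕ+) :
    modelMatrix ω i (i + 1) = ((defect ω i * defect ω (i + 1) : ℝ) : ℂ) := by
  rw [modelMatrix, defectRow_self, if_neg (PNat.lt_add_right i 1).ne]
  push_cast
  ring

theorem modelMatrix_add (i j : ℕ+) :
    modelMatrix ω i (i + j) =
      (∏ k ∈ Ioo i (i + j), -conj (ω k)) * ((defect ω i * defect ω (i + j) : ℝ) : ℂ) := by
  have hlt : i < i + j := PNat.lt_add_right i j
  rw [modelMatrix, defectRow, if_pos (PNat.add_one_le_iff.mpr hlt), if_neg hlt.ne,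
    Ico_add_one_left_eq_Ioo]
  push_cast
  ring

theorem defectRow_mul_add_modelMatrix_mul (hω : ∀ k, ‖ω k‖ < 1) (i a c : ℕ+) :
    conj (defectRow ω i a) * defectRow ω i c + conj (modelMatrix ω i a) * modelMatrix ω i c =
      conj (defectRow ω (i + 1) a) * defectRow ω (i + 1) c + if i = a ∧ i = c then 1 else 0 := by
  have key := defect_mul_self_add hω i
  rw [defectRow_eq_neg_conj_mul_add i a, defectRow_eq_neg_conj_mul_add i c, modelMatrix, modelMatrix, ite_and]
  split_ifs <;>
    simp only [map_add, map_mul, map_neg, map_zero, Complex.conj_conj, Complex.conj_ofReal]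
  · linear_combination (conj (defectRow ω (i + 1) a) * defectRow ω (i + 1) c + 1) * key
  all_goals
    linear_combination conj (defectRow ω (i + 1) a) * defectRow ω (i + 1) c * key

theorem gram_defectRow_modelMatrix (hω : ∀ k, ‖ω k‖ < 1) (i b a c : ℕ+) (ha : a ≤ b) :
    conj (defectRow ω i a) * defectRow ω i c +
        ∑ r ∈ Icc i b, conj (modelMatrix ω r a) * modelMatrix ω r c =
      if a = c ∧ i ≤ a then 1 else 0 := by
  induction i using (measure fun i : ℕ+ => (b : ℕ) + 1 - i).wf.induction with
  | _ i ih =>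
  rcases lt_or_ge b i with hbi | hib
  · rw [Icc_eq_empty hbi.not_ge, defectRow_eq_zero_of_lt (ha.trans_lt hbi),
      if_neg fun h => hbi.not_ge (h.2.trans ha)]
    simp
  rw [← insert_Icc_add_one_left_eq_Icc hib, sum_insert (by simp), ← add_assoc,
    defectRow_mul_add_modelMatrix_mul hω, add_right_comm,
    ih (i + 1) (show (b : ℕ) + 1 - (i + 1 : ℕ+) < (b : ℕ) + 1 - i by pnat_to_nat; omega)]
  split_ifs with h₁ h₂ h₃ <;> first | (exfalso; pnat_to_nat; omega) | norm_num

theorem sum_norm_sq_modelMatrix_mul_add (hω : ∀ k, ‖ω k‖ < 1) (i b : ℕ+) (x : ℕ+ → ℂ) :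
    ∑ r ∈ Icc i b, ‖∑ a ∈ Icc i b, modelMatrix ω r a * x a‖ ^ 2 +
        ‖∑ a ∈ Icc i b, defectRow ω i a * x a‖ ^ 2 =
      ∑ a ∈ Icc i b, ‖x a‖ ^ 2 := by
  apply Complex.ofReal_injective
  push_cast
  simp only [← Complex.conj_mul']
  calc _ = ∑ a ∈ Icc i b, ∑ c ∈ Icc i b, conj (x a) * x c *
          (conj (defectRow ω i a) * defectRow ω i c +
            ∑ r ∈ Icc i b, conj (modelMatrix ω r a) * modelMatrix ω r c) := by
        simp only [map_sum, sum_mul_sum]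
        rw [sum_comm, ← sum_add_distrib]
        refine sum_congr rfl fun a _ => ?_
        rw [sum_comm, ← sum_add_distrib]
        refine sum_congr rfl fun c _ => ?_
        rw [mul_add, mul_sum, add_comm]
        simp only [map_mul]
        congr 1
        · ring
        · exact sum_congr rfl fun r _ => by ring
    _ = ∑ a ∈ Icc i b, ∑ c ∈ Icc i b, conj (x a) * x c * if a = c ∧ i ≤ a then 1 else 0 := by
        refine sum_congr rfl fun a ha => sum_congr rfl fun c _ => ?_
        rw [gram_defectRow_modelMatrix hω i b a c (mem_Icc.mp ha).2]
    _ = ∑ a ∈ Icc i b, conj (x a) * x a := by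
        refine sum_congr rfl fun a ha => ?_
        simp [(mem_Icc.mp ha).1, (mem_Icc.mp ha).2]

theorem defectRow_add_one (i : ℕ+) : defectRow ω i (i + 1) = -conj (ω i) * defect ω (i + 1) := by
  rw [defectRow_eq_neg_conj_mul_add, defectRow_self, if_neg (PNat.lt_add_right i 1).ne, add_zero]

theorem exists_test_vector (hω : ∀ k, ‖ω k‖ < 1) {i b : ℕ+} (h : i + 1 < b) :
    ∃ x : ℕ+ → ℂ, x b = 1 ∧ ∑ a ∈ Icc i b, defectRow ω i a * x a = 0 ∧
      ∑ a ∈ Icc i b, modelMatrix ω i a * x a = 0 := by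
  have key := defect_mul_self_add hω i
  have ht : (defect ω (i + 1) : ℂ) ≠ 0 := Complex.ofReal_ne_zero.mpr (defect_pos hω _).ne'
  have hii1 : i < i + 1 := PNat.lt_add_right i 1
  have hi : i ∈ Icc i b := mem_Icc.mpr ⟨le_rfl, hii1.le.trans h.le⟩
  have hi1 : i + 1 ∈ Icc i b := mem_Icc.mpr ⟨hii1.le, h.le⟩
  have hb : b ∈ Icc i b := mem_Icc.mpr ⟨hii1.le.trans h.le, le_rfl⟩
  have hbi : b ≠ i := (hii1.trans h).ne'
  have hbi1 : b ≠ i + 1 := h.ne'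
  set P := defectRow ω i b
  set K := modelMatrix ω i b
  let x : ℕ+ → ℂ := Pi.single i (-defect ω i * P - conj (ω i) * K) +
    Pi.single (i + 1) ((ω i * P - defect ω i * K) / defect ω (i + 1)) + Pi.single b 1
  refine ⟨x, by simp [x, hbi, hbi1], ?_, ?_⟩
  · simp only [x, Pi.add_apply, mul_add, sum_add_distrib, Pi.single_apply, mul_ite, mul_zero,
      sum_ite_eq', hi, hi1, hb, if_true, defectRow_self, defectRow_add_one]
    field_simp
    linear_combination (-P) * key
  · simp only [x, Pi.add_apply, mul_add, sum_add_distrib, Pi.single_apply, mul_ite, mul_zero,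
      sum_ite_eq', hi, hi1, hb, if_true, modelMatrix_self, modelMatrix_add_one]
    push_cast
    field_simp
    linear_combination (-K) * key

variable (ω) in
noncomputable def modelColumn (j : ℕ+) : ℓ²(ℕ+, ℂ) :=
  ∑ r ∈ Icc 1 j, lp.single 2 r (modelMatrix ω r j)

theorem modelColumn_eq_sum {j b : ℕ+} (h : j ≤ b) :
    modelColumn ω j = ∑ r ∈ Icc 1 b, lp.single 2 r (modelMatrix ω r j) := by
  refine sum_subset (Icc_subset_Icc_right h) fun r hr hrj => ?_
  have : j < r := lt_of_not_ge fun h' => hrj (mem_Icc.mpr ⟨one_le, h'⟩)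
  rw [modelMatrix_eq_zero_of_lt this, lp.single_zero]

theorem inner_single_modelColumn (i j : ℕ+) :
    inner ℂ (lp.single 2 i (1 : ℂ)) (modelColumn ω j) = modelMatrix ω i j := by
  rw [modelColumn_eq_sum (le_max_right i j), lp.inner_single_left, lp.coeFn_sum, Finset.sum_apply]
  simp [Pi.single_apply, one_le]

theorem norm_sum_smul_modelColumn_sq_le (hω : ∀ k, ‖ω k‖ < 1) (s : Finset ℕ+) (x : ℕ+ → ℂ) :
    ‖∑ j ∈ s, x j • modelColumn ω j‖ ^ 2 ≤ ∑ j ∈ s, ‖x j‖ ^ 2 := by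
  set b := s.sup id
  have hs : s ⊆ Icc 1 b := fun j hj => mem_Icc.mpr ⟨one_le, le_sup (f := id) hj⟩
  let y : ℕ+ → ℂ := fun j => if j ∈ s then x j else 0
  have hsum : ∑ j ∈ s, x j • modelColumn ω j =
      ∑ r ∈ Icc 1 b, lp.single 2 r (∑ a ∈ Icc 1 b, modelMatrix ω r a * y a) := by
    calc ∑ j ∈ s, x j • modelColumn ω j = ∑ a ∈ Icc 1 b, y a • modelColumn ω a := by
          simp only [y, ite_smul, zero_smul, sum_ite_mem, inter_eq_right.mpr hs]
      _ = ∑ a ∈ Icc 1 b, ∑ r ∈ Icc 1 b, lp.single 2 r (modelMatrix ω r a * y a) := by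
          refine sum_congr rfl fun a ha => ?_
          rw [modelColumn_eq_sum (mem_Icc.mp ha).2, smul_sum]
          simp only [← lp.single_smul, smul_eq_mul, mul_comm]
      _ = _ := by
          rw [sum_comm]
          simp only [← lp.singleAddMonoidHom_apply, ← map_sum]
  have hy : ∑ j ∈ s, ‖x j‖ ^ 2 = ∑ a ∈ Icc 1 b, ‖y a‖ ^ 2 := by
    simp only [y, apply_ite (‖·‖ ^ 2), norm_zero, sq, mul_zero, sum_ite_mem, inter_eq_right.mpr hs]
  rw [hsum, lp.norm_sum_single_sq, hy, ← sum_norm_sq_modelMatrix_mul_add hω 1 b y]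
  exact le_add_of_nonneg_right (sq_nonneg _)

theorem exists_contraction_modelMatrix (hω : ∀ k, ‖ω k‖ < 1) :
    ∃ T : ℓ²(ℕ+, ℂ) →L[ℂ] ℓ²(ℕ+, ℂ), ‖T‖ ≤ 1 ∧
      ∀ i j, inner ℂ (lp.single 2 i (1 : ℂ)) (T (lp.single 2 j 1)) = modelMatrix ω i j := by
  obtain ⟨T, hT, hTe⟩ := lp.exists_clm_of_norm_sum_sq_le (norm_sum_smul_modelColumn_sq_le hω)
  exact ⟨T, hT, fun i j => by rw [hTe, inner_single_modelColumn]⟩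

theorem corner_eq_modelMatrix (hω : ∀ k, ‖ω k‖ < 1) (T : ℓ²(ℕ+, ℂ) →L[ℂ] ℓ²(ℕ+, ℂ))
    (hT : ‖T‖ ≤ 1) {m : ℕ+ → ℕ+ → ℂ}
    (hent : ∀ i j, inner ℂ (lp.single 2 i (1 : ℂ)) (T (lp.single 2 j 1)) = m i j)
    {i b : ℕ+} (hib : i + 1 < b)
    (hband : ∀ r ∈ Icc i b, ∀ a ∈ Icc i b, (r, a) ≠ (i, b) → m r a = modelMatrix ω r a) :
    m i b = modelMatrix ω i b := by
  obtain ⟨x, hxb, hWx, hMx⟩ := exists_test_vector hω hib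
  have hi : i ∈ Icc i b := mem_Icc.mpr ⟨le_rfl, ((PNat.lt_add_right i 1).trans hib).le⟩
  have hb : b ∈ Icc i b := mem_Icc.mpr ⟨((PNat.lt_add_right i 1).trans hib).le, le_rfl⟩
  set δ := m i b - modelMatrix ω i b
  set u : ℓ²(ℕ+, ℂ) := ∑ a ∈ Icc i b, lp.single 2 a (x a)
  have hTu : ∀ r ∈ Icc i b, inner ℂ (lp.single 2 r (1 : ℂ)) (T u) =
      ∑ a ∈ Icc i b, modelMatrix ω r a * x a + if r = i then δ else 0 := by
    intro r hr
    simp only [u, lp.inner_single_apply_sum_single, hent]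
    rw [← sub_eq_iff_eq_add', ← sum_sub_distrib, sum_eq_single_of_mem b hb]
    · by_cases hri : r = i
      · rw [hri, if_pos rfl, hxb]
        ring
      · rw [if_neg hri, hband r hr b hb (by simp [hri]), sub_self]
    · intro a ha hab
      rw [hband r hr a ha (by simp [hab]), sub_self]
  have hbessel := lp.sum_norm_inner_single_sq_le hT u (Icc i b)
  rw [sum_congr rfl fun r hr => by rw [hTu r hr], sum_norm_sq_add_ite_of_eq_zero hi hMx,
    lp.norm_sum_single_sq, ← sum_norm_sq_modelMatrix_mul_add hω i b x, hWx, norm_zero] at hbessel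
  have hδ : ‖δ‖ ^ 2 ≤ 0 := by linarith
  exact sub_eq_zero.mp (by simpa using hδ)

theorem eq_modelMatrix_of_contraction (hω : ∀ k, ‖ω k‖ < 1) (T : ℓ²(ℕ+, ℂ) →L[ℂ] ℓ²(ℕ+, ℂ))
    (hT : ‖T‖ ≤ 1) {m : ℕ+ → ℕ+ → ℂ}
    (hent : ∀ i j, inner ℂ (lp.single 2 i (1 : ℂ)) (T (lp.single 2 j 1)) = m i j)
    (hdiag : ∀ i, m i i = ω i) (hsuper : ∀ i, m i (i + 1) = modelMatrix ω i (i + 1))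
    (hlow : ∀ i j, j < i → m i j = 0) (i a : ℕ+) :
    m i a = modelMatrix ω i a := by
  suffices hband : ∀ n : ℕ, ∀ r c : ℕ+, (c : ℕ) ≤ r + n → m r c = modelMatrix ω r c from
    hband a i a (by pnat_to_nat; omega)
  intro n
  induction n with
  | zero =>
    intro r c hrc
    rcases (show c ≤ r by pnat_to_nat; omega).lt_or_eq with h | rfl
    · rw [hlow r c h, modelMatrix_eq_zero_of_lt h]
    · rw [hdiag, modelMatrix_self]
  | succ n ih =>
    intro r c hrc
    by_cases hn : (c : ℕ) ≤ r + n
    · exact ih r c hn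
    rcases Nat.eq_zero_or_pos n with rfl | hn0
    · obtain rfl : c = r + 1 := by pnat_to_nat; omega
      exact hsuper r
    refine corner_eq_modelMatrix hω T hT hent (by pnat_to_nat; omega) fun r' hr' c' hc' hne => ?_
    rw [mem_Icc] at hr' hc'
    rw [Ne, Prod.mk.injEq] at hne
    exact ih r' c' (by pnat_to_nat; omega)

end InfiniteContraction

open InfiniteContraction in
/-- An infinite upper-triangular matrix with diagonal `ωᵢ ∈ 𝔻` and superdiagonal
`√(1 − |ωᵢ|²)·√(1 − |ω_{i+1}|²)` is the matrix of a contraction on `ℓ²(ℕ*)` iff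
all its entries above the superdiagonal are those of the model matrix. -/
theorem infinite_contraction_iff (ω : ℕ+ → ℂ) (hω : ∀ k, ‖ω k‖ < 1)
    (m : ℕ+ → ℕ+ → ℂ)
    (hdiag : ∀ i, m i i = ω i)
    (hsuper : ∀ i : ℕ+, m i (i + 1) =
      ((Real.sqrt (1 - ‖ω i‖ ^ 2) *
        Real.sqrt (1 - ‖ω (i + 1)‖ ^ 2) : ℝ) : ℂ))
    (hlow : ∀ i j : ℕ+, j < i → m i j = 0) :
    (∃ T : lp (fun _ : ℕ+ => ℂ) 2 →L[ℂ] lp (fun _ : ℕ+ => ℂ) 2, ‖T‖ ≤ 1 ∧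
        ∀ i j : ℕ+, (inner ℂ (lp.single 2 i 1) (T (lp.single 2 j 1)) : ℂ) = m i j) ↔
      ∀ i j : ℕ+, m i (i + j) =
        (∏ k ∈ Finset.Ioo i (i + j), -(conj (ω k))) *
          ((Real.sqrt (1 - ‖ω i‖ ^ 2) *
            Real.sqrt (1 - ‖ω (i + j)‖ ^ 2) : ℝ) : ℂ) := by
  constructor
  · rintro ⟨T, hT, hent⟩ i j
    rw [eq_modelMatrix_of_contraction hω T hT hent hdiag
      (fun i => (hsuper i).trans (modelMatrix_add_one i).symm) hlow, modelMatrix_add]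
    rfl
  · intro hm
    obtain ⟨T, hT, hTe⟩ := exists_contraction_modelMatrix hω
    refine ⟨T, hT, fun i j => (hTe i j).trans ?_⟩
    rcases lt_trichotomy i j with h | rfl | h
    · obtain ⟨d, rfl⟩ : ∃ d, j = i + d := ⟨j - i, (PNat.add_sub_of_lt h).symm⟩
      rw [hm, modelMatrix_add]
      rfl
    · rw [hdiag, modelMatrix_self]
    · rw [hlow i j h, modelMatrix_eq_zero_of_lt h]
end

section
/- Let H be a complex Hilbert space, ω ∈ 𝔻 a point of the open unit disk, and T a bounded linear operator on H such that Id − conj(ω)·T is invertible. Then T is a contraction (‖T‖ ≤ 1) if and only if M_ω(T) = (ω·Id − T)·(Id − conj(ω)·T)⁻¹ is a contraction (‖M_ω(T)‖ ≤ 1). -/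
open scoped ComplexConjugate

/-- The Möbius transform of an operator: `M_ω(T) = (ω·Id − T)·(Id − conj(ω)·T)⁻¹`. -/
noncomputable def mobius {H : Type*} [NormedAddCommGroup H] [InnerProductSpace ℂ H]
    (ω : ℂ) (T : H →L[ℂ] H) : H →L[ℂ] H :=
  (ω • (1 : H →L[ℂ] H) - T) * Ring.inverse (1 - conj ω • T)

/-!
With `x = (Id − conj(ω)·T) y`, the transform sends `x` to `ω·y − T y`, and the identity
`‖y − conj(ω)·T y‖² − ‖ω·y − T y‖² = (1 − |ω|²)(‖y‖² − ‖T y‖²)` shows that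
`‖M_ω(T) x‖ ≤ ‖x‖` exactly when `‖T y‖ ≤ ‖y‖`, because `1 − |ω|² > 0`.
Since `Id − conj(ω)·T` is onto, the two operators are contractions together.
-/

section Vectors

variable {𝕜 E : Type*} [RCLike 𝕜] [NormedAddCommGroup E] [InnerProductSpace 𝕜 E]

theorem norm_sub_conj_smul_sq_sub_norm_smul_sub_sq (ω : 𝕜) (x y : E) :
    ‖x - conj ω • y‖ ^ 2 - ‖ω • x - y‖ ^ 2 = (1 - ‖ω‖ ^ 2) * (‖x‖ ^ 2 - ‖y‖ ^ 2) := by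
  rw [@norm_sub_sq 𝕜, @norm_sub_sq 𝕜, inner_smul_right, inner_smul_left, norm_smul, norm_smul,
    RCLike.norm_conj]
  ring

theorem norm_le_iff_norm_smul_sub_le {ω : 𝕜} (hω : ‖ω‖ < 1) (x y : E) :
    ‖y‖ ≤ ‖x‖ ↔ ‖ω • x - y‖ ≤ ‖x - conj ω • y‖ := by
  have hpos : 0 < 1 - ‖ω‖ ^ 2 := by nlinarith [norm_nonneg ω]
  have key := norm_sub_conj_smul_sq_sub_norm_smul_sub_sq ω x y
  rw [← sq_le_sq₀ (norm_nonneg _) (norm_nonneg _), ← sq_le_sq₀ (norm_nonneg _) (norm_nonneg _),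
    ← sub_nonneg, ← sub_nonneg (b := ‖ω • x - y‖ ^ 2), key, mul_nonneg_iff_of_pos_left hpos]

end Vectors

theorem mobius_apply_of_isUnit {H : Type*} [NormedAddCommGroup H] [InnerProductSpace ℂ H]
    {ω : ℂ} {T : H →L[ℂ] H} (h : IsUnit (1 - conj ω • T)) (y : H) :
    mobius ω T ((1 - conj ω • T) y) = ω • y - T y := by
  rw [mobius, mul_apply_eq_comp, ← mul_apply_eq_comp _ (1 - conj ω • T),
    Ring.inverse_mul_cancel _ h, one_apply_eq_self, sub_apply, smul_apply, one_apply_eq_self]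

theorem contraction_iff_mobius_contraction_general {H : Type*} [NormedAddCommGroup H]
    [InnerProductSpace ℂ H] (ω : ℂ) (hω : ‖ω‖ < 1)
    (T : H →L[ℂ] H) (h : IsUnit (1 - conj ω • T)) :
    ‖T‖ ≤ 1 ↔ ‖mobius ω T‖ ≤ 1 := by
  set A := 1 - conj ω • T
  have hA : Function.Surjective A :=
    (Module.End.isUnit_iff _ |>.mp (h.map ContinuousLinearMap.toLinearMapRingHom)).surjective
  calc ‖T‖ ≤ 1 ↔ ∀ y, ‖T y‖ ≤ ‖y‖ := by simp only [T.opNorm_le_iff zero_le_one, one_mul]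
    _ ↔ ∀ y, ‖mobius ω T (A y)‖ ≤ ‖A y‖ := forall_congr' fun y => by
      rw [mobius_apply_of_isUnit h, norm_le_iff_norm_smul_sub_le hω y (T y)]
      simp only [A, sub_apply, smul_apply, one_apply_eq_self]
    _ ↔ ∀ x, ‖mobius ω T x‖ ≤ ‖x‖ := (hA.forall (p := fun x => ‖mobius ω T x‖ ≤ ‖x‖)).symm
    _ ↔ ‖mobius ω T‖ ≤ 1 := by
      simp only [(mobius ω T).opNorm_le_iff zero_le_one, one_mul]

/-- For `ω ∈ 𝔻`, `T` is a contraction iff `M_ω(T)` is a contraction. -/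
theorem contraction_iff_mobius_contraction {H : Type*} [NormedAddCommGroup H]
    [InnerProductSpace ℂ H] [CompleteSpace H] (ω : ℂ) (hω : ‖ω‖ < 1)
    (T : H →L[ℂ] H) (h : IsUnit (1 - conj ω • T)) :
    ‖T‖ ≤ 1 ↔ ‖mobius ω T‖ ≤ 1 :=
  contraction_iff_mobius_contraction_general ω hω T h
end

section
/- Let H be a complex Hilbert space, ω ∈ ℂ, and T a bounded linear operator on H such that Id − conj(ω)·T is invertible. Then for every x ∈ H, setting y = (Id − conj(ω)·T)⁻¹ x, one has ‖x‖² − ‖M_ω(T)x‖² = (1 − |ω|²)·(‖y‖² − ‖Ty‖²), where M_ω(T) = (ω·Id − T)·(Id − conj(ω)·T)⁻¹. -/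
open scoped ComplexConjugate

/-- Writing `x = y - conj ω • T y` and `M_ω(T) x = ω • y - T y`, the theorem reduces to this
identity, in which the cross terms `re ⟪u, conj ω • v⟫` and `re ⟪ω • u, v⟫` coincide and cancel. -/
theorem norm_sub_conj_smul_sq_sub_norm_smul_sub_sq_s6 {𝕜 E : Type*} [RCLike 𝕜]
    [NormedAddCommGroup E] [InnerProductSpace 𝕜 E] (ω : 𝕜) (u v : E) :
    ‖u - conj ω • v‖ ^ 2 - ‖ω • u - v‖ ^ 2 = (1 - ‖ω‖ ^ 2) * (‖u‖ ^ 2 - ‖v‖ ^ 2) := by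
  rw [@norm_sub_sq 𝕜, @norm_sub_sq 𝕜, inner_smul_right, inner_smul_left, norm_smul, norm_smul,
    RCLike.norm_conj]
  ring

theorem ContinuousLinearMap.apply_ringInverse_apply {R M : Type*} [Semiring R]
    [TopologicalSpace M] [AddCommMonoid M] [Module R M] {A : M →L[R] M} (hA : IsUnit A)
    (x : M) : A (Ring.inverse A x) = x := by
  rw [← mul_apply_eq_comp, Ring.mul_inverse_cancel A hA, one_apply_eq_self]

theorem mobius_apply {H : Type*} [NormedAddCommGroup H] [InnerProductSpace ℂ H]
    (ω : ℂ) (T : H →L[ℂ] H) (x : H) :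
    mobius ω T x =
      ω • Ring.inverse (1 - conj ω • T) x - T (Ring.inverse (1 - conj ω • T) x) := by
  simp [mobius]

theorem norm_sq_sub_mobius_norm_sq_general {H : Type*} [NormedAddCommGroup H]
    [InnerProductSpace ℂ H] (ω : ℂ) (T : H →L[ℂ] H)
    (h : IsUnit (1 - conj ω • T)) (x : H) :
    ‖x‖ ^ 2 - ‖mobius ω T x‖ ^ 2 =
      (1 - ‖ω‖ ^ 2) *
        (‖Ring.inverse (1 - conj ω • T) x‖ ^ 2 - ‖T (Ring.inverse (1 - conj ω • T) x)‖ ^ 2) := by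
  set y := Ring.inverse (1 - conj ω • T) x
  have hx : y - conj ω • T y = x := by
    simpa using ContinuousLinearMap.apply_ringInverse_apply h x
  calc ‖x‖ ^ 2 - ‖mobius ω T x‖ ^ 2 = ‖y - conj ω • T y‖ ^ 2 - ‖ω • y - T y‖ ^ 2 := by
        rw [hx, mobius_apply]
    _ = (1 - ‖ω‖ ^ 2) * (‖y‖ ^ 2 - ‖T y‖ ^ 2) :=
        norm_sub_conj_smul_sq_sub_norm_smul_sub_sq_s6 ω y (T y)

/-- The key identity: for `y = (Id − conj(ω)·T)⁻¹ x`,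
`‖x‖² − ‖M_ω(T)x‖² = (1 − |ω|²)(‖y‖² − ‖Ty‖²)`. -/
theorem norm_sq_sub_mobius_norm_sq {H : Type*} [NormedAddCommGroup H]
    [InnerProductSpace ℂ H] [CompleteSpace H] (ω : ℂ) (T : H →L[ℂ] H)
    (h : IsUnit (1 - conj ω • T)) (x : H) :
    ‖x‖ ^ 2 - ‖mobius ω T x‖ ^ 2 =
      (1 - ‖ω‖ ^ 2) *
        (‖Ring.inverse (1 - conj ω • T) x‖ ^ 2 - ‖T (Ring.inverse (1 - conj ω • T) x)‖ ^ 2) :=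
  norm_sq_sub_mobius_norm_sq_general ω T h x
end

section
/- Let n ≥ 3 and let ω₁, …, ω_{n−1} ∈ 𝔻 with ω₂ = 0. Let C be the (n−1) × (n−1) complex matrix with entries c_{i,j} = 0 if j ≤ i, c_{i,i+1} = ω_{i+1}, and c_{i,j} = (∏_{k=i+2}^{j−1} (−conj(ω_k)))·√(1 − |ω_{i+1}|²)·√(1 − |ωⱼ|²) for j ≥ i + 2 (empty product equal to 1). Then C*C is the diagonal matrix whose first two diagonal entries are 0 and whose remaining diagonal entries (in positions 3 through n−1) are all equal to 1. -/
/-! The Gram matrix `CᴴC` is Hermitian, so it suffices to pair column `j` with column `j' ≥ j`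
(1-based, `ρ_k = √(1 - |ω_k|²)`); only rows `i < j` contribute. For `i ≤ j - 2` both entries
carry the factor `∏_{k=i+2}^{j-1} (-ω̄_k) ρ_{i+1}`, so the products are
`(∏_{k=i+2}^{j-1} |ω_k|²)(1 - |ω_{i+1}|²)` times a factor not depending on `i`; these weights
telescope to `1 - ∏_{k=2}^{j-1} |ω_k|² = 1` since `ω₂ = 0`. The last row `i = j - 1`
contributes `ω̄_j c_{j-1,j'}`, which completes `ρ_j² + |ω_j|² = 1` when `j' = j` and cancels
the rest when `j' > j`. -/

open scoped ComplexConjugate Matrix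

/-- The (n−1)×(n−1) matrix `C` of Fact 1 (indices written 1-based: the entry `c_{i,j}` is
`factMatrixC n ω ⟨i-1,_⟩ ⟨j-1,_⟩`): `c_{i,j} = 0` for `j ≤ i`, `c_{i,i+1} = ω_{i+1}`, and
`c_{i,j} = (∏_{k=i+2}^{j−1} (−conj ω_k))·√(1−|ω_{i+1}|²)·√(1−|ω_j|²)` for `j ≥ i+2`. -/
noncomputable def factMatrixC (n : ℕ) (ω : ℕ → ℂ) : Matrix (Fin (n - 1)) (Fin (n - 1)) ℂ :=
  Matrix.of fun i j =>
    if (j : ℕ) ≤ (i : ℕ) then 0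
    else if (j : ℕ) = (i : ℕ) + 1 then ω ((j : ℕ) + 1)
    else
      (∏ k ∈ Finset.Ico ((i : ℕ) + 3) ((j : ℕ) + 1), -(conj (ω k))) *
        ((Real.sqrt (1 - ‖ω ((i : ℕ) + 2)‖ ^ 2) *
          Real.sqrt (1 - ‖ω ((j : ℕ) + 1)‖ ^ 2) : ℝ) : ℂ)

open Finset

theorem Finset.sum_Ico_prod_Ico_mul_one_sub {R : Type*} [CommRing R] (p : ℕ → R) {a b : ℕ}
    (hab : a ≤ b) :
    ∑ i ∈ Ico a b, (∏ k ∈ Ico (i + 1) b, p k) * (1 - p i) = 1 - ∏ k ∈ Ico a b, p k := by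
  induction b, hab using Nat.le_induction with
  | base => simp
  | succ b hab ih =>
    have hsucc : ∀ i ∈ Ico a b, (∏ k ∈ Ico (i + 1) (b + 1), p k) * (1 - p i) =
        (∏ k ∈ Ico (i + 1) b, p k) * (1 - p i) * p b := fun i hi => by
      rw [prod_Ico_succ_top (by simp at hi; omega)]; ring
    rw [sum_Ico_succ_top hab, sum_congr rfl hsucc, ← sum_mul, ih, prod_Ico_succ_top hab,
      Ico_self, prod_empty]
    ring

theorem Matrix.IsHermitian.ext_of_le {ι α : Type*} [LinearOrder ι] [Star α] {A B : Matrix ι ι α}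
    (hA : A.IsHermitian) (hB : B.IsHermitian) (h : ∀ i j, i ≤ j → A i j = B i j) : A = B := by
  ext i j
  rcases le_total i j with hij | hji
  · exact h i j hij
  · rw [← hA.apply, ← hB.apply, h j i hji]

noncomputable def defect (z : ℂ) : ℝ := √(1 - ‖z‖ ^ 2)

theorem ofReal_defect_sq {z : ℂ} (hz : ‖z‖ ≤ 1) : (defect z : ℂ) ^ 2 = 1 - (‖z‖ : ℂ) ^ 2 := by
  rw [← Complex.ofReal_pow, defect, Real.sq_sqrt (by nlinarith [norm_nonneg z])]
  push_cast; ring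

noncomputable def factEntry (ω : ℕ → ℂ) (i j : ℕ) : ℂ :=
  if j ≤ i then 0
  else if j = i + 1 then ω (j + 1)
  else
    (∏ k ∈ Ico (i + 3) (j + 1), -conj (ω k)) * ((defect (ω (i + 2)) * defect (ω (j + 1)) : ℝ) : ℂ)

theorem factMatrixC_apply (n : ℕ) (ω : ℕ → ℂ) (i j : Fin (n - 1)) :
    factMatrixC n ω i j = factEntry ω i j := rfl

section factEntry

variable (ω : ℕ → ℂ) {i j : ℕ}

theorem factEntry_of_le (h : j ≤ i) : factEntry ω i j = 0 := if_pos h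

theorem factEntry_self_add_one : factEntry ω i (i + 1) = ω (i + 2) := by
  rw [factEntry, if_neg (by omega), if_pos rfl]

theorem factEntry_of_add_two_le (h : i + 2 ≤ j) :
    factEntry ω i j =
      (∏ k ∈ Ico (i + 3) (j + 1), -conj (ω k)) * defect (ω (i + 2)) * defect (ω (j + 1)) := by
  rw [factEntry, if_neg (by omega), if_neg (by omega)]
  push_cast; ring

end factEntry

theorem conj_factEntry_mul_factEntry (ω : ℕ → ℂ) {i N j : ℕ} (hi : i ≤ N) (hj : N + 2 ≤ j)
    (hω : ‖ω (i + 2)‖ ≤ 1) :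
    conj (factEntry ω i (N + 2)) * factEntry ω i j =
      (∏ k ∈ Ico (i + 3) (N + 3), (‖ω k‖ : ℂ) ^ 2) * (1 - (‖ω (i + 2)‖ : ℂ) ^ 2) *
        (defect (ω (N + 3)) * (∏ k ∈ Ico (N + 3) (j + 1), -conj (ω k)) * defect (ω (j + 1))) := by
  have hnorm : ∏ k ∈ Ico (i + 3) (N + 3), (‖ω k‖ : ℂ) ^ 2 =
      (∏ k ∈ Ico (i + 3) (N + 3), -ω k) * ∏ k ∈ Ico (i + 3) (N + 3), -conj (ω k) := by
    rw [← prod_mul_distrib]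
    exact prod_congr rfl fun k _ => by rw [neg_mul_neg, Complex.mul_conj']
  rw [factEntry_of_add_two_le ω (by omega), factEntry_of_add_two_le ω (by omega),
    ← prod_Ico_consecutive _ (by omega : i + 3 ≤ N + 3) (by omega : N + 3 ≤ j + 1),
    ← ofReal_defect_sq hω, hnorm]
  simp only [map_mul, map_prod, map_neg, Complex.conj_conj, Complex.conj_ofReal]
  ring

theorem sum_range_conj_factEntry_add_two_mul_factEntry (ω : ℕ → ℂ) (hω2 : ω 2 = 0) {N j : ℕ}
    (hj : N + 2 ≤ j) (hω : ∀ k, 2 ≤ k → k ≤ N + 2 → ‖ω k‖ ≤ 1) :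
    ∑ i ∈ range (N + 1), conj (factEntry ω i (N + 2)) * factEntry ω i j =
      defect (ω (N + 3)) * (∏ k ∈ Ico (N + 3) (j + 1), -conj (ω k)) * defect (ω (j + 1)) := by
  have htele : ∑ i ∈ range (N + 1),
      (∏ k ∈ Ico (i + 3) (N + 3), (‖ω k‖ : ℂ) ^ 2) * (1 - (‖ω (i + 2)‖ : ℂ) ^ 2) = 1 := by
    have := sum_Ico_prod_Ico_mul_one_sub (fun k => (‖ω k‖ : ℂ) ^ 2) (by omega : 2 ≤ N + 3)
    rw [prod_eq_zero (by simp : 2 ∈ Ico 2 (N + 3)) (by simp [hω2]), sub_zero,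
      ← sum_Ico_add' _ 0 (N + 1) 2] at this
    simpa using this
  rw [sum_congr rfl fun i hi => conj_factEntry_mul_factEntry ω (by simp at hi; omega) hj
    (hω _ le_add_self (by simp at hi; omega)), ← sum_mul, htele, one_mul]

theorem sum_range_conj_factEntry_mul_factEntry (ω : ℕ → ℂ) (hω2 : ω 2 = 0) {m j j' : ℕ}
    (hjm : j ≤ m) (hjj' : j ≤ j') (hω : ∀ k, 2 ≤ k → k ≤ j + 1 → ‖ω k‖ ≤ 1) :
    ∑ i ∈ range m, conj (factEntry ω i j) * factEntry ω i j' =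
      if j = j' then (if j < 2 then 0 else 1) else 0 := by
  rw [← sum_subset (range_subset_range.mpr hjm) fun i _ hi => by
    rw [factEntry_of_le ω (by simpa using hi), map_zero, zero_mul]]
  obtain rfl | rfl | ⟨N, rfl⟩ : j = 0 ∨ j = 1 ∨ ∃ N, j = N + 2 :=
    (by omega : j = 0 ∨ j = 1 ∨ 2 ≤ j).imp_right (.imp_right fun h => ⟨j - 2, by omega⟩)
  · simp
  · simp [factEntry_self_add_one, hω2]
  have hsuper : factEntry ω (N + 1) (N + 2) = ω (N + 3) := factEntry_self_add_one ω
  rw [sum_range_succ, sum_range_conj_factEntry_add_two_mul_factEntry ω hω2 hjj'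
    fun k hk hk' => hω k hk (by omega), hsuper]
  rcases hjj'.eq_or_lt with rfl | hlt
  · have hρ := ofReal_defect_sq (hω (N + 3) (by omega) le_rfl)
    rw [Ico_self, prod_empty, if_pos rfl, if_neg (by omega), hsuper, Complex.conj_mul']
    linear_combination hρ
  · rw [factEntry_of_add_two_le ω hlt, prod_eq_prod_Ico_succ_bot (by omega : N + 3 < j' + 1),
      if_neg hlt.ne]
    ring

theorem conjTranspose_mul_self_eq_diagonal_general (n : ℕ) (ω : ℕ → ℂ)
    (hω : ∀ k, 1 ≤ k → k ≤ n - 1 → ‖ω k‖ < 1) (hω2 : ω 2 = 0) :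
    (factMatrixC n ω)ᴴ * factMatrixC n ω =
      Matrix.diagonal (fun i : Fin (n - 1) => if (i : ℕ) < 2 then 0 else 1) := by
  refine (Matrix.isHermitian_conjTranspose_mul_self _).ext_of_le
    (Matrix.isHermitian_diagonal_of_self_adjoint _ ?_) fun j j' hjj' => ?_
  · ext i
    simp only [Pi.star_apply, apply_ite star, star_zero, star_one]
  rw [Matrix.mul_apply, Matrix.diagonal_apply]
  simp only [Matrix.conjTranspose_apply, factMatrixC_apply, Complex.star_def]
  rw [Fin.sum_univ_eq_sum_range (fun i => conj (factEntry ω i j) * factEntry ω i j'),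
    sum_range_conj_factEntry_mul_factEntry ω hω2 j.is_lt.le (Fin.le_iff_val_le_val.mp hjj')
      fun k hk hk' => (hω k (by omega) (by omega)).le]
  simp only [Fin.ext_iff]

/-- Fact 1: if `ω₂ = 0`, then `C*C` is diagonal with first two diagonal entries `0`
and all remaining diagonal entries `1`. -/
theorem conjTranspose_mul_self_eq_diagonal (n : ℕ) (hn : 3 ≤ n) (ω : ℕ → ℂ)
    (hω : ∀ k, 1 ≤ k → k ≤ n - 1 → ‖ω k‖ < 1) (hω2 : ω 2 = 0) :
    (factMatrixC n ω)ᴴ * factMatrixC n ω =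
      Matrix.diagonal (fun i : Fin (n - 1) => if (i : ℕ) < 2 then 0 else 1) :=
  conjTranspose_mul_self_eq_diagonal_general n ω hω hω2
end

section
/- Let n ≥ 2, let ω ∈ 𝔻, and let T be an n × n complex upper-triangular matrix whose diagonal entries ω₁, …, ωₙ all lie in 𝔻. Then Id − conj(ω)·T is invertible, the matrix M_ω(T) = (ω·Id − T)·(Id − conj(ω)·T)⁻¹ is upper triangular, its diagonal entries are M_ω(T)[i,i] = (ω − ωᵢ)/(1 − conj(ω)·ωᵢ), and its superdiagonal entries are M_ω(T)[i,i+1] = T[i,i+1]·(|ω|² − 1)/((1 − conj(ω)·ωᵢ)·(1 − conj(ω)·ω_{i+1})) for 1 ≤ i ≤ n − 1. -/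
open scoped ComplexConjugate

/-- The Möbius transform of a square matrix: `M_ω(T) = (ω·Id − T)·(Id − conj(ω)·T)⁻¹`. -/
noncomputable def mobiusMatrix {n : ℕ} (ω : ℂ) (T : Matrix (Fin n) (Fin n) ℂ) :
    Matrix (Fin n) (Fin n) ℂ :=
  (ω • (1 : Matrix (Fin n) (Fin n) ℂ) - T) * (1 - conj ω • T)⁻¹

/-!
`Id − conj ω • T` is upper triangular with diagonal entries `1 − conj ω · ωᵢ`, which are nonzero
because `|conj ω · ωᵢ| < 1`; so it is invertible and its inverse is again upper triangular.
For upper-triangular matrices, the diagonal and superdiagonal entries of products and inverses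
depend only on the diagonal and superdiagonal entries of the factors, which reduces the theorem
to scalar identities. On the superdiagonal the cancellation
`(ω − ωᵢ) · conj ω − (1 − conj ω · ωᵢ) = |ω|² − 1` produces the stated factor.
-/

namespace Matrix.IsUpperTriangular

variable {m R : Type*} [LinearOrder m] [Fintype m]

section Semiring

variable [NonUnitalNonAssocSemiring R] {M N : Matrix m m R}

theorem mul_apply_self (hM : M.IsUpperTriangular) (hN : N.IsUpperTriangular) (i : m) :
    (M * N) i i = M i i * N i i := by
  rw [mul_apply]
  refine Finset.sum_eq_single i (fun k _ hki => ?_) (by simp)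
  rcases hki.lt_or_gt with hlt | hgt
  · rw [hM hlt, zero_mul]
  · rw [hN hgt, mul_zero]

theorem mul_apply_of_covBy (hM : M.IsUpperTriangular) (hN : N.IsUpperTriangular) {i j : m}
    (hij : i ⋖ j) : (M * N) i j = M i i * N i j + M i j * N j j := by
  rw [mul_apply, ← Finset.sum_pair (f := fun k => M i k * N k j) hij.ne]
  refine (Finset.sum_subset (Finset.subset_univ _) fun k _ hk => ?_).symm
  simp only [Finset.mem_insert, Finset.mem_singleton, not_or] at hk
  rcases Ne.lt_or_gt hk.1 with hki | hik
  · rw [hM hki, zero_mul]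
  · rw [hN ((not_lt.1 (hij.2 hik)).lt_of_ne (Ne.symm hk.2)), mul_zero]

end Semiring

variable [DecidableEq m]

theorem inv [CommRing R] {M : Matrix m m R} (hM : M.IsUpperTriangular) :
    M⁻¹.IsUpperTriangular := by
  by_cases hdet : IsUnit M.det
  · have := M.invertibleOfIsUnitDet hdet
    exact blockTriangular_inv_of_blockTriangular hM
  · rw [nonsing_inv_apply_not_isUnit M hdet]
    exact blockTriangular_zero

variable [Field R] {M : Matrix m m R}

theorem isUnit_det (hM : M.IsUpperTriangular) (hdiag : ∀ i, M i i ≠ 0) : IsUnit M.det := by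
  rw [det_of_isUpperTriangular hM, isUnit_iff_ne_zero]
  exact Finset.prod_ne_zero_iff.2 fun i _ => hdiag i

theorem inv_apply_self (hM : M.IsUpperTriangular) (hdiag : ∀ i, M i i ≠ 0) (i : m) :
    M⁻¹ i i = (M i i)⁻¹ := by
  have h := congrFun₂ (mul_nonsing_inv M (hM.isUnit_det hdiag)) i i
  rw [hM.mul_apply_self hM.inv, one_apply_eq] at h
  exact eq_inv_of_mul_eq_one_right h

theorem inv_apply_of_covBy (hM : M.IsUpperTriangular) (hdiag : ∀ i, M i i ≠ 0) {i j : m}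
    (hij : i ⋖ j) : M⁻¹ i j = -M i j / (M i i * M j j) := by
  have h := congrFun₂ (mul_nonsing_inv M (hM.isUnit_det hdiag)) i j
  rw [hM.mul_apply_of_covBy hM.inv hij, one_apply_ne hij.ne, hM.inv_apply_self hdiag] at h
  have hi := hdiag i
  have hj := hdiag j
  field_simp at h ⊢
  linear_combination h

end Matrix.IsUpperTriangular

theorem Complex.one_sub_conj_mul_ne_zero {ω z : ℂ} (hω : ‖ω‖ ≤ 1) (hz : ‖z‖ < 1) :
    1 - conj ω * z ≠ 0 := by
  have hlt : ‖conj ω * z‖ < 1 := by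
    rw [norm_mul, Complex.norm_conj]
    exact mul_lt_one_of_nonneg_of_lt_one_right hω (norm_nonneg z) hz
  rw [sub_ne_zero]
  rintro h
  simp [← h] at hlt

theorem mobiusMatrix_triangular_general {n : ℕ} (ω : ℂ) (hω : ‖ω‖ < 1)
    (T : Matrix (Fin n) (Fin n) ℂ)
    (hdiag : ∀ i, ‖T i i‖ < 1)
    (hlow : ∀ i j : Fin n, j < i → T i j = 0) :
    IsUnit (1 - conj ω • T) ∧
    (∀ i j : Fin n, j < i → mobiusMatrix ω T i j = 0) ∧
    (∀ i : Fin n, mobiusMatrix ω T i i = (ω - T i i) / (1 - conj ω * T i i)) ∧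
    (∀ i j : Fin n, (j : ℕ) = (i : ℕ) + 1 →
      mobiusMatrix ω T i j =
        T i j * ((((‖ω‖ ^ 2 : ℝ) : ℂ) - 1) /
          ((1 - conj ω * T i i) * (1 - conj ω * T j j)))) := by
  set A : Matrix (Fin n) (Fin n) ℂ := ω • 1 - T
  set B : Matrix (Fin n) (Fin n) ℂ := 1 - conj ω • T
  have hA : A.IsUpperTriangular := fun i j (h : j < i) => by
    simp [A, hlow i j h, Matrix.one_apply_ne h.ne']
  have hB : B.IsUpperTriangular := fun i j (h : j < i) => by
    simp [B, hlow i j h, Matrix.one_apply_ne h.ne']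
  have hBdiag : ∀ i, B i i ≠ 0 := fun i => by
    simpa [B] using Complex.one_sub_conj_mul_ne_zero hω.le (hdiag i)
  refine ⟨B.isUnit_iff_isUnit_det.2 (hB.isUnit_det hBdiag), fun i j h => hA.mul hB.inv h,
    fun i => ?_, fun i j hij => ?_⟩
  · rw [mobiusMatrix, hA.mul_apply_self hB.inv, hB.inv_apply_self hBdiag]
    simp [A, B, div_eq_mul_inv]
  · have hcov : i ⋖ j := Fin.covBy_iff.2 (Nat.covBy_iff_add_one_eq.2 hij.symm)
    have hi := hBdiag i
    have hj := hBdiag j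
    rw [mobiusMatrix, hA.mul_apply_of_covBy hB.inv hcov, hB.inv_apply_of_covBy hBdiag hcov,
      hB.inv_apply_self hBdiag]
    simp only [A, B, Matrix.sub_apply, Matrix.smul_apply, Matrix.one_apply_eq,
      Matrix.one_apply_ne hcov.ne, smul_eq_mul] at hi hj ⊢
    rw [Complex.ofReal_pow, ← Complex.mul_conj']
    set bi := 1 - conj ω * T i i with hbi
    set bj := 1 - conj ω * T j j
    field_simp
    linear_combination -T i j * hbi

/-- For an upper-triangular matrix `T` with diagonal entries in `𝔻` and `ω ∈ 𝔻`,
`Id − conj(ω)·T` is invertible, `M_ω(T)` is upper triangular, its diagonal entries are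
`(ω − ωᵢ)/(1 − conj(ω)·ωᵢ)`, and its superdiagonal entries are
`T[i,i+1]·(|ω|² − 1)/((1 − conj(ω)·ωᵢ)(1 − conj(ω)·ω_{i+1}))`. -/
theorem mobiusMatrix_triangular {n : ℕ} (hn : 2 ≤ n) (ω : ℂ) (hω : ‖ω‖ < 1)
    (T : Matrix (Fin n) (Fin n) ℂ)
    (hdiag : ∀ i, ‖T i i‖ < 1)
    (hlow : ∀ i j : Fin n, j < i → T i j = 0) :
    IsUnit (1 - conj ω • T) ∧
    (∀ i j : Fin n, j < i → mobiusMatrix ω T i j = 0) ∧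
    (∀ i : Fin n, mobiusMatrix ω T i i = (ω - T i i) / (1 - conj ω * T i i)) ∧
    (∀ i j : Fin n, (j : ℕ) = (i : ℕ) + 1 →
      mobiusMatrix ω T i j =
        T i j * ((((‖ω‖ ^ 2 : ℝ) : ℂ) - 1) /
          ((1 - conj ω * T i i) * (1 - conj ω * T j j)))) :=
  mobiusMatrix_triangular_general ω hω T hdiag hlow
end

section
/- Let (ω_k)_{k≥1} be any sequence in the open unit disk 𝔻, and let m : ℕ* × ℕ* → ℂ be the infinite matrix with m(i,j) = ωⱼ if i = j, m(i,j) = (∏_{k=i+1}^{j−1} (−conj(ω_k)))·√(1 − |ωᵢ|²)·√(1 − |ωⱼ|²) if i < j (empty product equal to 1), and m(i,j) = 0 if i > j. Then there exists a bounded linear operator T on ℓ²(ℕ*) with ‖T‖ ≤ 1 such that ⟨T e_j, e_i⟩ = m(i,j) for all i, j ≥ 1, where (e_k)_{k≥1} is the canonical orthonormal basis of ℓ²(ℕ*). -/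
/-!
Write `d_k = √(1 - |ω_k|²)` and, for `x ∈ ℓ²`, `c_n = ∑_{j ≥ n} (∏_{n ≤ k < j} -conj ω_k) d_j x_j`
(`tailSum ω x n`, indices starting at `0`). Then `(T x)_n = ω_n x_n + d_n c_{n+1}` and
`c_n = d_n x_n - conj ω_n c_{n+1}`: the pair `((T x)_n, c_n)` is the image of `(x_n, c_{n+1})`
under the unitary matrix `[[ω_n, d_n], [d_n, -conj ω_n]]`. Hence
`|(T x)_n|² + |c_n|² = |x_n|² + |c_{n+1}|²`, and summing over `n < N` gives
`∑_{n<N} |(T x)_n|² ≤ ∑_{n<N} |x_n|² + |c_N|²`. The coefficients of `c_N` have square sum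
`1 - ∏ |ω_k|² ≤ 1` (the sum telescopes), so by Cauchy–Schwarz `|c_N|² ≤ ∑_{j ≥ N} |x_j|²`, and
therefore `‖T x‖ ≤ ‖x‖`.
-/

open Finset
open scoped ComplexConjugate

lemma summable_mul_and_norm_tsum_mul_sq_le {ι R : Type*} [NormedRing R] [CompleteSpace R]
    {a x : ι → R} (ha : Summable fun i => ‖a i‖ ^ 2) (hx : Summable fun i => ‖x i‖ ^ 2) :
    Summable (fun i => a i * x i) ∧
      ‖∑' i, a i * x i‖ ^ 2 ≤ (∑' i, ‖a i‖ ^ 2) * ∑' i, ‖x i‖ ^ 2 := by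
  obtain ⟨hsum, hle⟩ := Real.summable_and_inner_le_Lp_mul_Lq_tsum_of_nonneg .two_two
    (fun i => norm_nonneg (a i)) (fun i => norm_nonneg (x i))
    (by simpa only [Real.rpow_two] using ha) (by simpa only [Real.rpow_two] using hx)
  simp only [Real.rpow_two, ← Real.sqrt_eq_rpow] at hle
  have hax : Summable fun i => ‖a i * x i‖ :=
    hsum.of_nonneg_of_le (fun i => norm_nonneg _) fun i => norm_mul_le _ _
  refine ⟨hax.of_norm, ?_⟩
  calc ‖∑' i, a i * x i‖ ^ 2 ≤ (∑' i, ‖a i‖ * ‖x i‖) ^ 2 := by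
        gcongr
        exact (norm_tsum_le_tsum_norm hax).trans
          (hax.tsum_le_tsum (fun i => norm_mul_le _ _) hsum)
    _ ≤ (√(∑' i, ‖a i‖ ^ 2) * √(∑' i, ‖x i‖ ^ 2)) ^ 2 := by
        gcongr
    _ = (∑' i, ‖a i‖ ^ 2) * ∑' i, ‖x i‖ ^ 2 := by
        rw [mul_pow, Real.sq_sqrt (tsum_nonneg fun i => by positivity),
          Real.sq_sqrt (tsum_nonneg fun i => by positivity)]

lemma prod_Ioo_natPred {M : Type*} [CommMonoid M] (f : ℕ+ → M) (i j : ℕ+) :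
    ∏ n ∈ Ioo i.natPred j.natPred, f n.succPNat = ∏ k ∈ Ioo i j, f k :=
  prod_nbij' Nat.succPNat PNat.natPred
    (fun n hn => by simpa [← PNat.natPred_lt_natPred] using hn)
    (fun k hk => by simpa [← PNat.natPred_lt_natPred] using hk)
    (fun n _ => Nat.natPred_succPNat n) (fun k _ => PNat.succPNat_natPred k) (fun _ _ => rfl)

lemma memℓp_two_iff_summable_sq {ι : Type*} {E : ι → Type*} [∀ i, NormedAddCommGroup (E i)]
    {f : ∀ i, E i} : Memℓp f 2 ↔ Summable fun i => ‖f i‖ ^ 2 := by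
  simp [memℓp_gen_iff (p := 2) (by norm_num)]

lemma lp.norm_sq_eq_tsum_norm_sq {ι : Type*} {E : ι → Type*} [∀ i, NormedAddCommGroup (E i)]
    (f : lp E 2) : ‖f‖ ^ 2 = ∑' i, ‖f i‖ ^ 2 := by
  simpa using lp.norm_rpow_eq_tsum (p := 2) (by norm_num) f

namespace ModelMatrix

noncomputable def defect (w : ℂ) : ℝ := √(1 - ‖w‖ ^ 2)

lemma defect_sq {w : ℂ} (hw : ‖w‖ ≤ 1) : defect w ^ 2 = 1 - ‖w‖ ^ 2 :=
  Real.sq_sqrt (by nlinarith [norm_nonneg w])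

lemma norm_defect (w : ℂ) : ‖(defect w : ℂ)‖ = defect w :=
  Complex.norm_of_nonneg (Real.sqrt_nonneg _)

lemma norm_sq_add_norm_sq_rotation {w : ℂ} (hw : ‖w‖ ≤ 1) (x c : ℂ) :
    ‖w * x + defect w * c‖ ^ 2 + ‖defect w * x - conj w * c‖ ^ 2 = ‖x‖ ^ 2 + ‖c‖ ^ 2 := by
  have hd := defect_sq hw
  simp only [← Complex.normSq_eq_norm_sq, Complex.normSq_apply, Complex.add_re, Complex.add_im,
    Complex.sub_re, Complex.sub_im, Complex.mul_re, Complex.mul_im, Complex.conj_re,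
    Complex.conj_im, Complex.ofReal_re, Complex.ofReal_im] at hd ⊢
  nlinarith [hd]

section Sequence

variable (ω : ℕ → ℂ)

noncomputable def rowWeight (i : ℕ) : ℂ := (∏ k ∈ range i, -conj (ω k)) * defect (ω i)

noncomputable def rowSum (x : ℕ → ℂ) : ℂ := ∑' i, rowWeight ω i * x i

noncomputable def tailSum (x : ℕ → ℂ) (n : ℕ) : ℂ :=
  rowSum (fun k => ω (k + n)) (fun k => x (k + n))

noncomputable def modelApply (x : ℕ → ℂ) (n : ℕ) : ℂ :=
  ω n * x n + defect (ω n) * tailSum ω x (n + 1)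

lemma rowSum_const_mul (c : ℂ) (x : ℕ → ℂ) : rowSum ω (fun i => c * x i) = c * rowSum ω x := by
  rw [rowSum, rowSum, ← tsum_mul_left]
  simp only [mul_left_comm]

lemma modelApply_const_mul (c : ℂ) (x : ℕ → ℂ) (n : ℕ) :
    modelApply ω (fun i => c * x i) n = c * modelApply ω x n := by
  simp only [modelApply, tailSum, rowSum_const_mul]
  ring

lemma tailSum_single (i j : ℕ) :
    tailSum ω (Pi.single j 1) (i + 1) =
      if i < j then (∏ k ∈ Ioo i j, -conj (ω k)) * defect (ω j) else 0 := by
  rw [tailSum, rowSum]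
  split_ifs with hij
  · obtain ⟨d, rfl⟩ : ∃ d, j = d + (i + 1) := ⟨j - (i + 1), by omega⟩
    rw [tsum_eq_single d fun k hk => by rw [Pi.single_eq_of_ne (by omega), mul_zero],
      Pi.single_eq_same, mul_one, rowWeight, ← Ico_add_one_left_eq_Ioo, prod_Ico_eq_prod_range,
      Nat.add_sub_cancel]
    simp only [add_comm]
  · refine (tsum_congr fun k => ?_).trans tsum_zero
    rw [Pi.single_eq_of_ne (by omega), mul_zero]

lemma modelApply_single (i j : ℕ) :
    modelApply ω (Pi.single j 1) i =
      if i = j then ω i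
      else if i < j then (∏ k ∈ Ioo i j, -conj (ω k)) * ((defect (ω i) * defect (ω j) : ℝ) : ℂ)
      else 0 := by
  rw [modelApply, tailSum_single]
  rcases lt_trichotomy i j with h | rfl | h
  · simp only [Pi.single_eq_of_ne h.ne, if_pos h, if_neg h.ne, mul_zero, zero_add,
      Complex.ofReal_mul]
    ring
  · simp
  · simp [h.not_gt, h.ne']

variable {ω} (hω : ∀ k, ‖ω k‖ ≤ 1)
include hω

lemma sum_range_norm_rowWeight_sq (N : ℕ) :
    ∑ i ∈ range N, ‖rowWeight ω i‖ ^ 2 = 1 - ∏ k ∈ range N, ‖ω k‖ ^ 2 := by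
  have hstep (i : ℕ) : ‖rowWeight ω i‖ ^ 2 =
      ∏ k ∈ range i, ‖ω k‖ ^ 2 - ∏ k ∈ range (i + 1), ‖ω k‖ ^ 2 := by
    rw [rowWeight, norm_mul, norm_prod, norm_defect, mul_pow, defect_sq (hω i), prod_range_succ,
      ← prod_pow]
    simp only [norm_neg, Complex.norm_conj]
    ring
  simp only [hstep, sum_range_sub', range_zero, prod_empty]

lemma sum_range_norm_rowWeight_sq_le_one (N : ℕ) : ∑ i ∈ range N, ‖rowWeight ω i‖ ^ 2 ≤ 1 := by
  rw [sum_range_norm_rowWeight_sq hω]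
  linarith [prod_nonneg fun k (_ : k ∈ range N) => sq_nonneg ‖ω k‖]

lemma summable_norm_rowWeight_sq : Summable fun i => ‖rowWeight ω i‖ ^ 2 :=
  summable_of_sum_range_le (fun _ => sq_nonneg _) (sum_range_norm_rowWeight_sq_le_one hω)

lemma tsum_norm_rowWeight_sq_le_one : ∑' i, ‖rowWeight ω i‖ ^ 2 ≤ 1 :=
  Real.tsum_le_of_sum_range_le (fun _ => sq_nonneg _) (sum_range_norm_rowWeight_sq_le_one hω)

variable {x : ℕ → ℂ} (hx : Summable fun i => ‖x i‖ ^ 2)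
include hx

lemma summable_rowWeight_mul : Summable fun i => rowWeight ω i * x i :=
  (summable_mul_and_norm_tsum_mul_sq_le (summable_norm_rowWeight_sq hω) hx).1

lemma norm_rowSum_sq_le : ‖rowSum ω x‖ ^ 2 ≤ ∑' i, ‖x i‖ ^ 2 :=
  (summable_mul_and_norm_tsum_mul_sq_le (summable_norm_rowWeight_sq hω) hx).2.trans <|
    mul_le_of_le_one_left (tsum_nonneg fun _ => sq_nonneg _) (tsum_norm_rowWeight_sq_le_one hω)

lemma rowSum_eq_defect_mul_sub :
    rowSum ω x =
      defect (ω 0) * x 0 - conj (ω 0) * rowSum (fun k => ω (k + 1)) (fun k => x (k + 1)) := by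
  rw [rowSum, (summable_rowWeight_mul hω hx).tsum_eq_zero_add, rowSum, sub_eq_add_neg,
    ← neg_mul, ← tsum_mul_left]
  simp only [rowWeight, prod_range_succ', range_zero, prod_empty, one_mul]
  congr 1
  exact tsum_congr fun i => by ring

lemma rowSum_add {y : ℕ → ℂ} (hy : Summable fun i => ‖y i‖ ^ 2) :
    rowSum ω (fun i => x i + y i) = rowSum ω x + rowSum ω y := by
  rw [rowSum, rowSum, rowSum,
    ← (summable_rowWeight_mul hω hx).tsum_add (summable_rowWeight_mul hω hy)]
  simp only [mul_add]

lemma norm_tailSum_sq_le (n : ℕ) : ‖tailSum ω x n‖ ^ 2 ≤ ∑' k, ‖x (k + n)‖ ^ 2 :=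
  norm_rowSum_sq_le (fun k => hω (k + n)) ((summable_nat_add_iff n).2 hx)

lemma tailSum_eq_defect_mul_sub (n : ℕ) :
    tailSum ω x n = defect (ω n) * x n - conj (ω n) * tailSum ω x (n + 1) := by
  rw [tailSum, rowSum_eq_defect_mul_sub (fun k => hω (k + n)) ((summable_nat_add_iff n).2 hx)]
  simp only [zero_add, add_right_comm _ 1 n]
  rfl

lemma norm_modelApply_sq_add_norm_tailSum_sq (n : ℕ) :
    ‖modelApply ω x n‖ ^ 2 + ‖tailSum ω x n‖ ^ 2 = ‖x n‖ ^ 2 + ‖tailSum ω x (n + 1)‖ ^ 2 := by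
  rw [tailSum_eq_defect_mul_sub hω hx n, modelApply]
  exact norm_sq_add_norm_sq_rotation (hω n) _ _

lemma sum_range_norm_modelApply_sq_add (N : ℕ) :
    ∑ n ∈ range N, ‖modelApply ω x n‖ ^ 2 + ‖tailSum ω x 0‖ ^ 2 =
      ∑ n ∈ range N, ‖x n‖ ^ 2 + ‖tailSum ω x N‖ ^ 2 := by
  induction N with
  | zero => simp
  | succ N ih =>
    rw [sum_range_succ, sum_range_succ]
    linarith [norm_modelApply_sq_add_norm_tailSum_sq hω hx N]

lemma sum_range_norm_modelApply_sq_le (N : ℕ) :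
    ∑ n ∈ range N, ‖modelApply ω x n‖ ^ 2 ≤ ∑' n, ‖x n‖ ^ 2 := by
  rw [← hx.sum_add_tsum_nat_add N]
  linarith [sum_range_norm_modelApply_sq_add hω hx N, norm_tailSum_sq_le hω hx N,
    sq_nonneg ‖tailSum ω x 0‖]

lemma summable_norm_modelApply_sq : Summable fun n => ‖modelApply ω x n‖ ^ 2 :=
  summable_of_sum_range_le (fun _ => sq_nonneg _) (sum_range_norm_modelApply_sq_le hω hx)

lemma tsum_norm_modelApply_sq_le : ∑' n, ‖modelApply ω x n‖ ^ 2 ≤ ∑' n, ‖x n‖ ^ 2 :=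
  Real.tsum_le_of_sum_range_le (fun _ => sq_nonneg _) (sum_range_norm_modelApply_sq_le hω hx)

lemma modelApply_add {y : ℕ → ℂ} (hy : Summable fun i => ‖y i‖ ^ 2) (n : ℕ) :
    modelApply ω (fun i => x i + y i) n = modelApply ω x n + modelApply ω y n := by
  simp only [modelApply, tailSum]
  rw [rowSum_add (fun k => hω (k + (n + 1)))
    ((summable_nat_add_iff (f := fun i => ‖x i‖ ^ 2) (n + 1)).2 hx)
    ((summable_nat_add_iff (f := fun i => ‖y i‖ ^ 2) (n + 1)).2 hy)]
  ring

end Sequence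

section Operator

variable (ω : ℕ+ → ℂ) (hω : ∀ k, ‖ω k‖ ≤ 1)

lemma summable_norm_sq_comp_succPNat (x : lp (fun _ : ℕ+ => ℂ) 2) :
    Summable fun n => ‖(x ∘ Nat.succPNat) n‖ ^ 2 :=
  Equiv.pnatEquivNat.symm.summable_iff.2 (memℓp_two_iff_summable_sq.1 x.2)

include hω in
lemma memℓp_modelApply_natPred (x : lp (fun _ : ℕ+ => ℂ) 2) :
    Memℓp (fun i : ℕ+ => modelApply (ω ∘ Nat.succPNat) (x ∘ Nat.succPNat) i.natPred) 2 :=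
  memℓp_two_iff_summable_sq.2 <| Equiv.pnatEquivNat.summable_iff.2 <|
    summable_norm_modelApply_sq (fun _ => hω _) (summable_norm_sq_comp_succPNat x)

noncomputable def modelLinearMap : lp (fun _ : ℕ+ => ℂ) 2 →ₗ[ℂ] lp (fun _ : ℕ+ => ℂ) 2 where
  toFun x := ⟨_, memℓp_modelApply_natPred ω hω x⟩
  map_add' x y := Subtype.ext <| funext fun i =>
    modelApply_add (fun _ => hω _) (summable_norm_sq_comp_succPNat x)
      (summable_norm_sq_comp_succPNat y) i.natPred
  map_smul' c x := Subtype.ext <| funext fun i =>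
    modelApply_const_mul (ω ∘ Nat.succPNat) c (x ∘ Nat.succPNat) i.natPred

lemma modelLinearMap_apply (x : lp (fun _ : ℕ+ => ℂ) 2) (i : ℕ+) :
    modelLinearMap ω hω x i = modelApply (ω ∘ Nat.succPNat) (x ∘ Nat.succPNat) i.natPred :=
  rfl

lemma norm_modelLinearMap_apply_le (x : lp (fun _ : ℕ+ => ℂ) 2) :
    ‖modelLinearMap ω hω x‖ ≤ ‖x‖ := by
  refine (pow_le_pow_iff_left₀ (norm_nonneg _) (norm_nonneg _) two_ne_zero).1 ?_
  rw [lp.norm_sq_eq_tsum_norm_sq, lp.norm_sq_eq_tsum_norm_sq]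
  calc ∑' i, ‖modelLinearMap ω hω x i‖ ^ 2
      = ∑' n, ‖modelApply (ω ∘ Nat.succPNat) (x ∘ Nat.succPNat) n‖ ^ 2 :=
        Equiv.pnatEquivNat.tsum_eq fun n => ‖modelApply _ _ n‖ ^ 2
    _ ≤ ∑' n, ‖(x ∘ Nat.succPNat) n‖ ^ 2 :=
        tsum_norm_modelApply_sq_le (fun _ => hω _) (summable_norm_sq_comp_succPNat x)
    _ = ∑' i, ‖x i‖ ^ 2 := Equiv.pnatEquivNat.symm.tsum_eq fun i => ‖x i‖ ^ 2

noncomputable def modelOperator : lp (fun _ : ℕ+ => ℂ) 2 →L[ℂ] lp (fun _ : ℕ+ => ℂ) 2 :=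
  (modelLinearMap ω hω).mkContinuous 1 fun x => by
    simpa only [one_mul] using norm_modelLinearMap_apply_le ω hω x

lemma norm_modelOperator_le : ‖modelOperator ω hω‖ ≤ 1 :=
  LinearMap.mkContinuous_norm_le _ zero_le_one _

lemma inner_single_modelOperator_single (i j : ℕ+) :
    inner ℂ (lp.single 2 i (1 : ℂ)) (modelOperator ω hω (lp.single 2 j 1)) =
      if i = j then ω i
      else if i < j then
        (∏ k ∈ Ioo i j, -conj (ω k)) * ((defect (ω i) * defect (ω j) : ℝ) : ℂ)
      else 0 := by
  have hsingle : (lp.single 2 j (1 : ℂ) : ℕ+ → ℂ) ∘ Nat.succPNat = Pi.single j.natPred 1 := by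
    ext n
    simp [Pi.single_apply, ← PNat.natPred_inj]
  rw [lp.inner_single_left, modelOperator, LinearMap.mkContinuous_apply, modelLinearMap_apply,
    hsingle, modelApply_single]
  simp [PNat.natPred_inj, PNat.natPred_lt_natPred, prod_Ioo_natPred (fun k => -conj (ω k))]

end Operator

end ModelMatrix

/-- For any sequence `(ω_k)` in the open unit disk, the infinite model matrix defines a
contraction on `ℓ²(ℕ*)`. -/
theorem infinite_modelMatrix_contraction (ω : ℕ+ → ℂ)
    (hω : ∀ k, ‖ω k‖ < 1)
    (m : ℕ+ → ℕ+ → ℂ)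
    (hm : ∀ i j : ℕ+, m i j =
      if i = j then ω i
      else if i < j then
        (∏ k ∈ Finset.Ioo i j, -(conj (ω k))) *
          ((Real.sqrt (1 - ‖ω i‖ ^ 2) *
            Real.sqrt (1 - ‖ω j‖ ^ 2) : ℝ) : ℂ)
      else 0) :
    ∃ T : lp (fun _ : ℕ+ => ℂ) 2 →L[ℂ] lp (fun _ : ℕ+ => ℂ) 2, ‖T‖ ≤ 1 ∧
      ∀ i j : ℕ+, (inner ℂ (lp.single 2 i 1) (T (lp.single 2 j 1)) : ℂ) = m i j :=
  ⟨ModelMatrix.modelOperator ω fun k => (hω k).le, ModelMatrix.norm_modelOperator_le _ _,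
    fun i j => by rw [ModelMatrix.inner_single_modelOperator_single, hm]; rfl⟩
end
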